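/- Let w and m be positive natural numbers with 2 ≤ m ≤ 2^w and suppose m does not divide 2^w. If J is uniformly distributed on {0, 1, …, 2^w − 1} and Y = 1 + ⌊m·J/2^w⌋, then (max_{1 ≤ k ≤ m} P(Y = k)) / (min_{1 ≤ k ≤ m} P(Y = k)) = (⌊2^w/m⌋ + 1)/⌊2^w/m⌋. -/

import Mathlib

/-- The probability that the multiply-and-floor method outputs `k`, when `J` is uniformly
distributed on `{0, 1, …, 2^w − 1}` and `Y = 1 + ⌊m·J/2^w⌋`:
`P(Y = k) = #{j < 2^w | 1 + ⌊m·j/2^w⌋ = k} / 2^w`. -/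
def floorMulProb (w m k : ℕ) : ℚ :=
  (((Finset.range (2 ^ w)).filter (fun j => 1 + m * j / 2 ^ w = k)).card : ℚ) / 2 ^ w

/-!
Write `r = N / m` with `N = 2^w`. The `j < N` with `⌊m j / N⌋ = i` are those with
`i r ≤ j < (i + 1) r`, i.e. the interval `[⌈i r⌉, ⌈i r + r⌉)`, whose length lies between
`⌊r⌋` and `⌊r⌋ + 1`. For `i = 0` the length is `⌈r⌉ = ⌊r⌋ + 1` since `r` is not an integer,
and by pigeonhole some length is `⌊r⌋`, because the `m` lengths add up to `N < m (⌊r⌋ + 1)`.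
-/

open Finset

namespace Nat

variable {R : Type*} [Semiring R] [LinearOrder R] [IsStrictOrderedRing R] [FloorSemiring R]

theorem floor_le_ceil_add_sub_ceil {a b : R} (ha : 0 ≤ a) (hb : 0 ≤ b) :
    ⌊b⌋₊ ≤ ⌈a + b⌉₊ - ⌈a⌉₊ := by
  have : ⌈a⌉₊ + ⌊b⌋₊ ≤ ⌈a + b⌉₊ := by
    rw [← ceil_add_natCast ha]
    exact ceil_mono (add_le_add_right (floor_le hb) a)
  omega

theorem ceil_add_sub_ceil_le (a b : R) : ⌈a + b⌉₊ - ⌈a⌉₊ ≤ ⌊b⌋₊ + 1 := by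
  have := ceil_add_le a b
  have := ceil_le_floor_add_one b
  omega

end Nat

section MulDivFibers

variable {N m i : ℕ}

theorem filter_range_mul_div_eq (hN : 0 < N) (hi : i < m) :
    {j ∈ range N | m * j / N = i} = Ico ⌈i * ((N : ℚ) / m)⌉₊ ⌈(i + 1) * ((N : ℚ) / m)⌉₊ := by
  have hm : (0 : ℚ) < m := Nat.cast_pos.mpr (by omega)
  ext j
  simp only [mem_filter, mem_range, mem_Ico, Nat.ceil_le, Nat.lt_ceil, Nat.div_eq_iff hN]
  rw [← mul_div_assoc, ← mul_div_assoc, div_le_iff₀ hm, lt_div_iff₀ hm]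
  norm_cast
  rw [mul_comm j m, add_one_mul]
  constructor
  · rintro ⟨-, hlo, hhi⟩
    omega
  · rintro ⟨hlo, hhi⟩
    have : m * j < m * N := hhi.trans_le (by rw [← add_one_mul]; exact Nat.mul_le_mul_right N hi)
    exact ⟨Nat.lt_of_mul_lt_mul_left this, hlo, by omega⟩

theorem card_filter_range_mul_div_eq (hN : 0 < N) (hi : i < m) :
    #{j ∈ range N | m * j / N = i} =
      ⌈i * ((N : ℚ) / m) + (N : ℚ) / m⌉₊ - ⌈i * ((N : ℚ) / m)⌉₊ := by
  rw [filter_range_mul_div_eq hN hi, Nat.card_Ico, add_one_mul]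

theorem div_le_card_filter_range_mul_div_eq (hN : 0 < N) (hi : i < m) :
    N / m ≤ #{j ∈ range N | m * j / N = i} := by
  rw [card_filter_range_mul_div_eq hN hi, ← Nat.floor_div_eq_div (K := ℚ)]
  exact Nat.floor_le_ceil_add_sub_ceil (by positivity) (by positivity)

theorem card_filter_range_mul_div_eq_le (hN : 0 < N) (hi : i < m) :
    #{j ∈ range N | m * j / N = i} ≤ N / m + 1 := by
  rw [card_filter_range_mul_div_eq hN hi, ← Nat.floor_div_eq_div (K := ℚ)]
  exact Nat.ceil_add_sub_ceil_le _ _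

theorem card_filter_range_mul_div_eq_zero (hN : 0 < N) (hm : 0 < m) (hmN : ¬ m ∣ N) :
    #{j ∈ range N | m * j / N = 0} = N / m + 1 := by
  refine le_antisymm (card_filter_range_mul_div_eq_le hN hm) ?_
  rw [card_filter_range_mul_div_eq hN hm, Nat.cast_zero, zero_mul, zero_add, Nat.ceil_zero,
    Nat.sub_zero, Nat.add_one_le_iff, Nat.lt_ceil, lt_div_iff₀ (by positivity)]
  exact_mod_cast (N.div_mul_le_self m).lt_of_ne fun h => hmN (Dvd.intro_left _ h)

theorem exists_card_filter_range_mul_div_eq (hN : 0 < N) (hm : 0 < m) :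
    ∃ i < m, #{j ∈ range N | m * j / N = i} = N / m := by
  obtain ⟨i, hi, hlt⟩ := exists_card_fiber_lt_of_card_lt_mul (s := range N) (t := range m)
    (f := fun j => m * j / N) (n := N / m + 1) (by simpa using Nat.lt_mul_div_succ N hm)
  rw [mem_range] at hi
  exact ⟨i, hi,
    le_antisymm (Nat.lt_add_one_iff.mp hlt) (div_le_card_filter_range_mul_div_eq hN hi)⟩

end MulDivFibers

theorem floorMulProb_eq {w m k : ℕ} (hk : 1 ≤ k) :
    floorMulProb w m k = #{j ∈ range (2 ^ w) | m * j / 2 ^ w = k - 1} / 2 ^ w := by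
  have hshift (x : ℕ) : 1 + x = k ↔ x = k - 1 := by omega
  simp only [floorMulProb, hshift]

theorem sup'_Icc_floorMulProb {w m : ℕ} (hmw : ¬ m ∣ 2 ^ w) (h : (Icc 1 m).Nonempty) :
    (Icc 1 m).sup' h (floorMulProb w m) = ((2 ^ w / m : ℕ) + 1 : ℚ) / 2 ^ w := by
  have hm : 1 ≤ m := nonempty_Icc.mp h
  refine le_antisymm (sup'_le _ _ fun k hk => ?_) (le_sup'_of_le _ (left_mem_Icc.mpr hm) ?_)
  · rw [mem_Icc] at hk
    rw [floorMulProb_eq hk.1]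
    gcongr
    exact_mod_cast card_filter_range_mul_div_eq_le (by positivity) (by omega)
  · rw [floorMulProb_eq le_rfl, Nat.sub_self,
      card_filter_range_mul_div_eq_zero (by positivity) hm hmw, Nat.cast_add_one]

theorem inf'_Icc_floorMulProb {w m : ℕ} (h : (Icc 1 m).Nonempty) :
    (Icc 1 m).inf' h (floorMulProb w m) = ((2 ^ w / m : ℕ) : ℚ) / 2 ^ w := by
  have hm : 1 ≤ m := nonempty_Icc.mp h
  obtain ⟨i, hi, hcard⟩ := exists_card_filter_range_mul_div_eq (N := 2 ^ w) (by positivity) hm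
  refine le_antisymm (inf'_le_of_le _ (mem_Icc.mpr ⟨Nat.le_add_left 1 i, hi⟩) ?_)
    (le_inf' _ _ fun k hk => ?_)
  · rw [floorMulProb_eq (Nat.le_add_left 1 i), Nat.add_sub_cancel, hcard]
  · rw [mem_Icc] at hk
    rw [floorMulProb_eq hk.1]
    gcongr
    exact_mod_cast div_le_card_filter_range_mul_div_eq (by positivity) (by omega)

theorem floorMul_ratio_exact_general (w m : ℕ) (hnd : ¬ m ∣ 2 ^ w) (hm : 1 ≤ m) :
    (Finset.Icc 1 m).sup' (Finset.nonempty_Icc.mpr hm) (floorMulProb w m) /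
        (Finset.Icc 1 m).inf' (Finset.nonempty_Icc.mpr hm) (floorMulProb w m)
      = ((2 ^ w / m : ℕ) + 1 : ℚ) / (2 ^ w / m : ℕ) := by
  rw [sup'_Icc_floorMulProb hnd, inf'_Icc_floorMulProb, div_div_div_cancel_right₀ (by positivity)]

/-- if `2 ≤ m ≤ 2^w` and `m` does not divide `2^w`, then
`(max_{1 ≤ k ≤ m} P(Y = k)) / (min_{1 ≤ k ≤ m} P(Y = k)) = (⌊2^w/m⌋ + 1)/⌊2^w/m⌋`. -/
theorem floorMul_ratio_exact (w m : ℕ) (hw : 0 < w) (hm1 : 2 ≤ m) (hm2 : m ≤ 2 ^ w)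
    (hnd : ¬ m ∣ 2 ^ w) (hm : 1 ≤ m) :
    (Finset.Icc 1 m).sup' (Finset.nonempty_Icc.mpr hm) (floorMulProb w m) /
        (Finset.Icc 1 m).inf' (Finset.nonempty_Icc.mpr hm) (floorMulProb w m)
      = ((2 ^ w / m : ℕ) + 1 : ℚ) / (2 ^ w / m : ℕ) :=
  floorMul_ratio_exact_general w m hnd hm
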